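/- Fix powers of two n and k1 with 2k1 ≤ n and a parameter F ≥ 2, and let G be an (n, n/k1, F)-flat filter. Then for every f ∈ [n] and every integer j' with 0 < |j'| ≤ n/(4k1): |Ĝ_f|^{1/2} · |Ĝ_{f − 2k1·j'}|^{1/2} ≤ (1/2)^{F−1} / |j'|^{(F−1)/2}. -/

import Mathlib

/-!
The shift `2 k1 j'` has absolute value at most `n / 2`, so it does not wrap around the cycle and
the circular distances of `f` and `f - 2 k1 j'` to `0` add up to at least `2 k1 |j'|`. One of the
two frequencies is therefore at distance at least `k1 |j'| ≥ n / B` (here `B = n / k1`), where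
flatness gives `Ĝ ≤ (1/4)^(F-1) / |j'|^(F-1)`; the other factor is at most `1`. Taking square
roots gives the bound.
-/

open Finset

/-- Discrete Fourier transform of a length-`n` signal, with `1/n` normalization. -/
noncomputable def dft (n : ℕ) [NeZero n] (X : ZMod n → ℂ) : ZMod n → ℂ :=
  fun f => (n : ℂ)⁻¹ * ∑ t : ZMod n, X t *
    Complex.exp (-(2 * Real.pi * Complex.I) * ((f * t).val : ℂ) / (n : ℂ))

/-- Circular (modulo-`n`) distance of an index to `0`. -/
def cdist (n : ℕ) (x : ZMod n) : ℕ := min x.val (n - x.val)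

/-- The (real) Fourier transform of a real-valued filter. -/
noncomputable def fhat (n : ℕ) [NeZero n] (G : ZMod n → ℝ) (f : ZMod n) : ℝ :=
  (dft n (fun t => ((G t : ℝ) : ℂ)) f).re

/-- `G` is an `(n,B,F)`-flat filter. -/
structure IsFlatFilter (n B F : ℕ) [NeZero n] (G : ZMod n → ℝ) : Prop where
  realFT : ∀ f, (dft n (fun t => ((G t : ℝ) : ℂ)) f).im = 0
  symm : ∀ f, fhat n G (-f) = fhat n G f
  nonneg : ∀ f, 0 ≤ fhat n G f
  le_one : ∀ f, fhat n G f ≤ 1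
  pass : ∀ f : ZMod n, (cdist n f : ℝ) ≤ (n : ℝ) / (2 * B) →
    1 - (1 / 4 : ℝ) ^ (F - 1) ≤ fhat n G f
  decay : ∀ f : ZMod n, (n : ℝ) / B ≤ (cdist n f : ℝ) →
    fhat n G f ≤ (1 / 4 : ℝ) ^ (F - 1) * ((n : ℝ) / (B * cdist n f)) ^ (F - 1)

lemma cdist_eq_natAbs_valMinAbs (n : ℕ) [NeZero n] (x : ZMod n) :
    cdist n x = x.valMinAbs.natAbs :=
  (ZMod.valMinAbs_natAbs_eq_min x).symm

lemma natAbs_le_cdist_add_cdist (n : ℕ) [NeZero n] {x y : ZMod n} {m : ℤ}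
    (hxy : x - y = m) (hm : 2 * m.natAbs ≤ n) :
    m.natAbs ≤ cdist n x + cdist n y := by
  have hcast : (m : ZMod n) = ((x.valMinAbs - y.valMinAbs : ℤ) : ZMod n) := by
    push_cast [ZMod.coe_valMinAbs]
    exact hxy.symm
  have hmin := ZMod.natAbs_min_of_le_div_two n _ _ hcast (by omega)
  rw [cdist_eq_natAbs_valMinAbs, cdist_eq_natAbs_valMinAbs]
  exact hmin.trans (Int.natAbs_sub_le _ _)

namespace IsFlatFilter

variable {n B F : ℕ} [NeZero n] {G : ZMod n → ℝ}

lemma fhat_le_of_mul_le_cdist (hG : IsFlatFilter n B F G) {k J : ℝ} (hBk : (B : ℝ) * k = n)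
    (hk : 0 < k) (hJ : 1 ≤ J) {x : ZMod n} (hx : k * J ≤ cdist n x) :
    fhat n G x ≤ (1 / 4 : ℝ) ^ (F - 1) / J ^ (F - 1) := by
  have hn : (0 : ℝ) < n := by exact_mod_cast Nat.pos_of_neZero n
  have hB : (0 : ℝ) < B := pos_of_mul_pos_left (hBk ▸ hn) hk.le
  have hnB : (n : ℝ) / B = k := by rw [← hBk, mul_div_cancel_left₀ _ hB.ne']
  have hkx : k ≤ cdist n x := le_trans (le_mul_of_one_le_right hk.le hJ) hx
  have hratio : (n : ℝ) / (B * cdist n x) ≤ 1 / J := by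
    rw [← div_div, hnB, div_le_div_iff₀ (by linarith) (by linarith)]
    linarith
  calc fhat n G x ≤ (1 / 4 : ℝ) ^ (F - 1) * ((n : ℝ) / (B * cdist n x)) ^ (F - 1) :=
        hG.decay x (hnB ▸ hkx)
    _ ≤ (1 / 4 : ℝ) ^ (F - 1) * (1 / J) ^ (F - 1) := by gcongr
    _ = (1 / 4 : ℝ) ^ (F - 1) / J ^ (F - 1) := by ring

lemma fhat_mul_fhat_le (hG : IsFlatFilter n B F G) {k J : ℝ} (hBk : (B : ℝ) * k = n)
    (hk : 0 < k) (hJ : 1 ≤ J) {x y : ZMod n} (hxy : 2 * (k * J) ≤ cdist n x + cdist n y) :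
    fhat n G x * fhat n G y ≤ (1 / 4 : ℝ) ^ (F - 1) / J ^ (F - 1) := by
  rcases le_total (cdist n y : ℝ) (cdist n x) with h | h
  · exact (mul_le_of_le_one_right (hG.nonneg x) (hG.le_one y)).trans
      (hG.fhat_le_of_mul_le_cdist hBk hk hJ (by linarith))
  · exact (mul_le_of_le_one_left (hG.nonneg y) (hG.le_one x)).trans
      (hG.fhat_le_of_mul_le_cdist hBk hk hJ (by linarith))

end IsFlatFilter

lemma sqrt_quarter_pow_div_pow_le (F : ℕ) {J : ℝ} (hJ : 1 ≤ J) :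
    Real.sqrt ((1 / 4 : ℝ) ^ (F - 1) / J ^ (F - 1)) ≤
      (1 / 2 : ℝ) ^ (F - 1) / J ^ (((F : ℝ) - 1) / 2) := by
  have hquarter : (1 / 4 : ℝ) ^ (F - 1) = ((1 / 2 : ℝ) ^ (F - 1)) ^ 2 := by
    rw [← pow_mul, mul_comm, pow_mul]; norm_num
  have hsqrtJ : Real.sqrt (J ^ (F - 1)) = J ^ (((F - 1 : ℕ) : ℝ) / 2) := by
    rw [Real.sqrt_eq_rpow, ← Real.rpow_natCast, ← Real.rpow_mul (by linarith)]
    ring_nf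
  -- only `≤`: at `F = 0` the natural subtraction `F - 1` truncates to `0`
  have hexp : ((F : ℝ) - 1) / 2 ≤ ((F - 1 : ℕ) : ℝ) / 2 := by
    gcongr
    rcases Nat.eq_zero_or_pos F with rfl | hF
    · norm_num
    · rw [Nat.cast_sub hF, Nat.cast_one]
  rw [hquarter, Real.sqrt_div (by positivity), Real.sqrt_sq (by positivity), hsqrtJ]
  gcongr

lemma pow_dvd_pow_of_pow_le_pow {p a b : ℕ} (hp : 1 < p) (h : p ^ b ≤ p ^ a) : p ^ b ∣ p ^ a :=
  pow_dvd_pow p ((Nat.pow_le_pow_iff_right hp).mp h)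

theorem flat_filter_product_decay_general (n k1 F : ℕ) [NeZero n]
    (hn : ∃ a, n = 2 ^ a) (hk1 : ∃ a, k1 = 2 ^ a)
    (G : ZMod n → ℝ) (hG : IsFlatFilter n (n / k1) F G)
    (f : ZMod n) (j' : ℤ) (hj0 : j' ≠ 0) (hj : (|j'| : ℝ) ≤ (n : ℝ) / (4 * k1)) :
    Real.sqrt |fhat n G f| *
        Real.sqrt |fhat n G (f - ((2 * k1 : ℕ) : ZMod n) * (j' : ZMod n))| ≤
      (1 / 2 : ℝ) ^ (F - 1) / (|j'| : ℝ) ^ (((F : ℝ) - 1) / 2) := by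
  have hk1pos : 0 < k1 := by
    refine Nat.pos_of_ne_zero fun h => hj0 (abs_eq_zero.mp ?_)
    exact_mod_cast le_antisymm (by simpa [h] using hj) (abs_nonneg (j' : ℝ))
  have hnatAbs : ((j'.natAbs : ℕ) : ℝ) = |(j' : ℝ)| := by
    rw [Nat.cast_natAbs, Int.cast_abs]
  have hJ1 : (1 : ℝ) ≤ j'.natAbs := by exact_mod_cast Int.natAbs_pos.mpr hj0
  have hjn : 4 * k1 * j'.natAbs ≤ n := by
    have : 4 * k1 * (|j'| : ℝ) ≤ n := by
      rwa [le_div_iff₀ (by positivity), mul_comm] at hj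
    rw [← hnatAbs] at this
    exact_mod_cast this
  have hdvd : k1 ∣ n := by
    have hkn : k1 ≤ n := by nlinarith [Int.natAbs_pos.mpr hj0]
    obtain ⟨a, rfl⟩ := hn
    obtain ⟨b, rfl⟩ := hk1
    exact pow_dvd_pow_of_pow_le_pow one_lt_two hkn
  set g := f - ((2 * k1 : ℕ) : ZMod n) * j'
  have hdist : 2 * (k1 * j'.natAbs) ≤ cdist n f + cdist n g := by
    have := natAbs_le_cdist_add_cdist n (x := f) (y := g) (m := 2 * k1 * j')
      (by simp [g]) (by rw [Int.natAbs_mul, Int.natAbs_mul]; simp; linarith)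
    simpa [Int.natAbs_mul, mul_assoc] using this
  have hprod := hG.fhat_mul_fhat_le (k := k1) (J := j'.natAbs)
    (by rw [← Nat.cast_mul, Nat.div_mul_cancel hdvd]) (by exact_mod_cast hk1pos) hJ1
    (by exact_mod_cast hdist)
  rw [abs_of_nonneg (hG.nonneg _), abs_of_nonneg (hG.nonneg _), ← Real.sqrt_mul (hG.nonneg _),
    ← hnatAbs]
  exact (Real.sqrt_le_sqrt hprod).trans (sqrt_quarter_pow_div_pow_le F hJ1)

/-- For an `(n, n/k1, F)`-flat filter `G`, every `f ∈ [n]` and every integer `j'` with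
`0 < |j'| ≤ n/(4k1)`:
`|Ĝ_f|^{1/2}·|Ĝ_{f − 2k1·j'}|^{1/2} ≤ (1/2)^{F−1} / |j'|^{(F−1)/2}`. -/
theorem flat_filter_product_decay (n k1 F : ℕ) [NeZero n]
    (hn : ∃ a, n = 2 ^ a) (hk1 : ∃ a, k1 = 2 ^ a) (hkn : 2 * k1 ≤ n) (hF : 2 ≤ F)
    (G : ZMod n → ℝ) (hG : IsFlatFilter n (n / k1) F G)
    (f : ZMod n) (j' : ℤ) (hj0 : j' ≠ 0) (hj : (|j'| : ℝ) ≤ (n : ℝ) / (4 * k1)) :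
    Real.sqrt |fhat n G f| *
        Real.sqrt |fhat n G (f - ((2 * k1 : ℕ) : ZMod n) * (j' : ZMod n))| ≤
      (1 / 2 : ℝ) ^ (F - 1) / (|j'| : ℝ) ^ (((F : ℝ) - 1) / 2) :=
  flat_filter_product_decay_general n k1 F hn hk1 G hG f j' hj0 hj
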